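/- arXiv:2103.15370 — 2 statements merged into one kernel-verified Lean document; each statement's English description precedes it below -/
import Mathlib

section
/- Updating a policy to π_new = argmin_{π'} D_KL(π'(·|s) ‖ exp(Q^{π_old}(s,·))/Z(s)) does not decrease the soft Q-value: Q^{π_new}(s,a) ≥ Q^{π_old}(s,a) for all states s and actions a (soft policy improvement). -/
/-- soft policy improvement: if `Qold` is the soft Q-function of a
full-support policy `πold` (fixed point of the soft Bellman operator T^{πold}),
`πnew` is the Boltzmann distribution proportional to exp(Qold s ·), and `Qnew`
is the soft Q-function of `πnew`, then Qnew dominates Qold pointwise. -/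
theorem soft_policy_improvement {S A : Type*} [Fintype S] [Fintype A]
    (r : S → A → ℝ) (γ : ℝ) (hγ0 : 0 ≤ γ) (hγ1 : γ < 1)
    (p : S → A → S → ℝ)
    (hp : ∀ s a, (∀ s', 0 ≤ p s a s') ∧ ∑ s', p s a s' = 1)
    (πold πnew : S → A → ℝ)
    (hπold_pos : ∀ s a, 0 < πold s a) (hπold_sum : ∀ s, ∑ a, πold s a = 1)
    (Qold Qnew : S → A → ℝ)
    (hπnew : ∀ s a, πnew s a = Real.exp (Qold s a) / ∑ b, Real.exp (Qold s b))
    (hQold : ∀ s a, Qold s a = r s a + γ * ∑ s', p s a s' *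
      ∑ a', πold s' a' * (Qold s' a' - Real.log (πold s' a')))
    (hQnew : ∀ s a, Qnew s a = r s a + γ * ∑ s', p s a s' *
      ∑ a', πnew s' a' * (Qnew s' a' - Real.log (πnew s' a'))) :
    ∀ s a, Qold s a ≤ Qnew s a := by
  intro s0 a0
  -- A is nonempty
  haveI hA : Nonempty A := by
    by_contra h
    rw [not_nonempty_iff] at h
    have := hπold_sum s0
    simp [Finset.univ_eq_empty] at this
  -- positivity of partition function and πnew
  have hZpos : ∀ s, 0 < ∑ b, Real.exp (Qold s b) := fun s =>
    Finset.sum_pos (fun b _ => Real.exp_pos _) Finset.univ_nonempty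
  have hπnew_pos : ∀ s a, 0 < πnew s a := fun s a => by
    rw [hπnew]; exact div_pos (Real.exp_pos _) (hZpos s)
  have hπnew_sum : ∀ s, ∑ a, πnew s a = 1 := fun s => by
    rw [Finset.sum_congr rfl fun a _ => hπnew s a, ← Finset.sum_div,
      div_self (hZpos s).ne']
  have hQold_eq : ∀ s a, Qold s a
      = Real.log (πnew s a) + Real.log (∑ b, Real.exp (Qold s b)) := fun s a => by
    rw [hπnew, Real.log_div (Real.exp_pos _).ne' (hZpos s).ne', Real.log_exp]; ring
  -- Gibbs inequality
  have gibbs : ∀ s, ∑ a, πold s a * (Qold s a - Real.log (πold s a))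
      ≤ ∑ a, πnew s a * (Qold s a - Real.log (πnew s a)) := by
    intro s
    have hR : ∑ a, πnew s a * (Qold s a - Real.log (πnew s a))
        = Real.log (∑ b, Real.exp (Qold s b)) := by
      have e : ∀ a, πnew s a * (Qold s a - Real.log (πnew s a))
          = πnew s a * Real.log (∑ b, Real.exp (Qold s b)) := fun a => by
        rw [hQold_eq s a]; ring
      rw [Finset.sum_congr rfl fun a _ => e a, ← Finset.sum_mul, hπnew_sum, one_mul]
    rw [hR]
    have step : ∀ a ∈ Finset.univ, πold s a * (Qold s a - Real.log (πold s a))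
        ≤ (πnew s a - πold s a)
          + πold s a * Real.log (∑ b, Real.exp (Qold s b)) := by
      intro a _
      have hlog : Real.log (πnew s a / πold s a) ≤ πnew s a / πold s a - 1 :=
        Real.log_le_sub_one_of_pos (div_pos (hπnew_pos s a) (hπold_pos s a))
      have h1 : πold s a * Real.log (πnew s a / πold s a)
          ≤ πold s a * (πnew s a / πold s a - 1) :=
        mul_le_mul_of_nonneg_left hlog (hπold_pos s a).le
      rw [Real.log_div (hπnew_pos s a).ne' (hπold_pos s a).ne'] at h1
      have h2 : πold s a * (πnew s a / πold s a - 1) = πnew s a - πold s a := by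
        rw [mul_sub, mul_one, mul_div_cancel₀ _ (hπold_pos s a).ne']
      rw [h2] at h1
      rw [hQold_eq s a]
      have h3 : πold s a * (Real.log (πnew s a)
            + Real.log (∑ b, Real.exp (Qold s b)) - Real.log (πold s a))
          = πold s a * (Real.log (πnew s a) - Real.log (πold s a))
            + πold s a * Real.log (∑ b, Real.exp (Qold s b)) := by ring
      rw [h3]
      linarith
    calc ∑ a, πold s a * (Qold s a - Real.log (πold s a))
        ≤ ∑ a, ((πnew s a - πold s a)
            + πold s a * Real.log (∑ b, Real.exp (Qold s b))) :=
          Finset.sum_le_sum step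
      _ = Real.log (∑ b, Real.exp (Qold s b)) := by
          rw [Finset.sum_add_distrib, Finset.sum_sub_distrib, hπnew_sum, hπold_sum,
            ← Finset.sum_mul, hπold_sum, one_mul]; ring
  -- minimum of Qnew - Qold over all pairs
  obtain ⟨⟨sm, am⟩, _, hmin⟩ := Finset.exists_min_image (Finset.univ : Finset (S × A))
    (fun sa => Qnew sa.1 sa.2 - Qold sa.1 sa.2) ⟨(s0, a0), Finset.mem_univ _⟩
  set δ := Qnew sm am - Qold sm am with hδ
  have hminD : ∀ s a, δ ≤ Qnew s a - Qold s a := fun s a =>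
    hmin (s, a) (Finset.mem_univ _)
  -- value difference bound
  have hV : ∀ s', δ ≤ (∑ a', πnew s' a' * (Qnew s' a' - Real.log (πnew s' a')))
      - ∑ a', πold s' a' * (Qold s' a' - Real.log (πold s' a')) := by
    intro s'
    have h1 : (∑ a', πnew s' a' * (Qnew s' a' - Real.log (πnew s' a')))
        - ∑ a', πnew s' a' * (Qold s' a' - Real.log (πnew s' a'))
        = ∑ a', πnew s' a' * (Qnew s' a' - Qold s' a') := by
      rw [← Finset.sum_sub_distrib]; congr 1; funext a'; ring
    have h2 : δ ≤ ∑ a', πnew s' a' * (Qnew s' a' - Qold s' a') := by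
      calc δ = ∑ a', πnew s' a' * δ := by
              rw [← Finset.sum_mul, hπnew_sum, one_mul]
        _ ≤ ∑ a', πnew s' a' * (Qnew s' a' - Qold s' a') :=
            Finset.sum_le_sum fun a' _ =>
              mul_le_mul_of_nonneg_left (hminD s' a') (hπnew_pos s' a').le
    have := gibbs s'
    linarith [h1, h2]
  -- key: for every (s,a), γ*δ ≤ Qnew s a - Qold s a
  have key : ∀ s a, γ * δ ≤ Qnew s a - Qold s a := by
    intro s a
    have hdiff : Qnew s a - Qold s a = γ * ∑ s', p s a s' *
        ((∑ a', πnew s' a' * (Qnew s' a' - Real.log (πnew s' a')))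
          - ∑ a', πold s' a' * (Qold s' a' - Real.log (πold s' a'))) := by
      rw [hQnew s a, hQold s a]
      rw [Finset.sum_congr rfl fun s' _ => mul_sub (p s a s') _ _,
        Finset.sum_sub_distrib]
      ring
    rw [hdiff]
    have hsum : γ * δ ≤ γ * ∑ s', p s a s' *
        ((∑ a', πnew s' a' * (Qnew s' a' - Real.log (πnew s' a')))
          - ∑ a', πold s' a' * (Qold s' a' - Real.log (πold s' a'))) := by
      apply mul_le_mul_of_nonneg_left _ hγ0
      calc δ = ∑ s', p s a s' * δ := by
              rw [← Finset.sum_mul, (hp s a).2, one_mul]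
        _ ≤ _ := Finset.sum_le_sum fun s' _ =>
              mul_le_mul_of_nonneg_left (hV s') ((hp s a).1 s')
    exact hsum
  have hδγ : γ * δ ≤ δ := key sm am
  have hδ0 : 0 ≤ δ := by nlinarith
  linarith [hminD s0 a0]
end

section
/- Soft policy iteration converges to an optimal max-entropy policy: for a finite MDP, the sequence of policies obtained by alternating soft policy evaluation (computing Q^{π_k}) and soft policy improvement (π_{k+1}(·|s) ∝ exp(Q^{π_k}(s,·))) yields a monotone nondecreasing sequence Q^{π_k} that converges to Q*, with Q^{π*}(s,a) ≥ Q^π(s,a) for all policies π with full support and all (s,a). -/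
private lemma spi_avg_le {ι : Type*} [Fintype ι] (w f : ι → ℝ) (M : ℝ)
    (hw : ∀ i, 0 ≤ w i) (hs : ∑ i, w i = 1) (hf : ∀ i, f i ≤ M) :
    ∑ i, w i * f i ≤ M := by
  calc ∑ i, w i * f i ≤ ∑ i, w i * M :=
        Finset.sum_le_sum fun i _ => mul_le_mul_of_nonneg_left (hf i) (hw i)
    _ = M := by rw [← Finset.sum_mul, hs, one_mul]

private lemma spi_gibbs {A : Type*} [Fintype A] [Nonempty A] (π f : A → ℝ)
    (hpos : ∀ a, 0 < π a) (hsum : ∑ a, π a = 1) :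
    ∑ a, π a * (f a - Real.log (π a)) ≤ Real.log (∑ a, Real.exp (f a)) := by
  set Z := ∑ a, Real.exp (f a) with hZ
  have hZpos : 0 < Z := Finset.sum_pos (fun a _ => Real.exp_pos _) Finset.univ_nonempty
  have key : ∀ a, π a * (f a - Real.log (π a) - Real.log Z) ≤ Real.exp (f a) / Z - π a := by
    intro a
    have hπa : (0:ℝ) < π a := hpos a
    have ht : 0 < Real.exp (f a) / (π a * Z) := by positivity
    have hlog : f a - Real.log (π a) - Real.log Z
        = Real.log (Real.exp (f a) / (π a * Z)) := by
      rw [Real.log_div (Real.exp_ne_zero _) (by positivity),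
        Real.log_mul (ne_of_gt (hpos a)) (ne_of_gt hZpos), Real.log_exp]
      ring
    rw [hlog]
    have h1 := Real.log_le_sub_one_of_pos ht
    calc π a * Real.log (Real.exp (f a) / (π a * Z))
        ≤ π a * (Real.exp (f a) / (π a * Z) - 1) :=
          mul_le_mul_of_nonneg_left h1 (hpos a).le
      _ = Real.exp (f a) / Z - π a := by
          field_simp
  have hsum2 : ∑ a, π a * (f a - Real.log (π a) - Real.log Z)
      ≤ ∑ a, (Real.exp (f a) / Z - π a) := Finset.sum_le_sum fun a _ => key a
  have hrhs : ∑ a, (Real.exp (f a) / Z - π a) = 0 := by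
    rw [Finset.sum_sub_distrib, hsum, ← Finset.sum_div, ← hZ, div_self (ne_of_gt hZpos)]
    ring
  have hlhs : ∑ a, π a * (f a - Real.log (π a) - Real.log Z)
      = (∑ a, π a * (f a - Real.log (π a))) - Real.log Z := by
    have h : ∀ a ∈ Finset.univ, π a * (f a - Real.log (π a) - Real.log Z)
        = π a * (f a - Real.log (π a)) - π a * Real.log Z := fun a _ => by ring
    rw [Finset.sum_congr rfl h, Finset.sum_sub_distrib, ← Finset.sum_mul, hsum, one_mul]
  rw [hlhs, hrhs] at hsum2
  linarith

private lemma spi_lse_shift {A : Type*} [Fintype A] [Nonempty A] (f g : A → ℝ) (M : ℝ)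
    (h : ∀ a, f a ≤ g a + M) :
    Real.log (∑ a, Real.exp (f a)) ≤ Real.log (∑ a, Real.exp (g a)) + M := by
  have hfpos : 0 < ∑ a, Real.exp (f a) :=
    Finset.sum_pos (fun a _ => Real.exp_pos _) Finset.univ_nonempty
  have hgpos : 0 < ∑ a, Real.exp (g a) :=
    Finset.sum_pos (fun a _ => Real.exp_pos _) Finset.univ_nonempty
  have h1 : ∑ a, Real.exp (f a) ≤ (∑ a, Real.exp (g a)) * Real.exp M := by
    rw [Finset.sum_mul]
    refine Finset.sum_le_sum fun a _ => ?_
    rw [← Real.exp_add]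
    exact Real.exp_le_exp.2 (h a)
  calc Real.log (∑ a, Real.exp (f a))
      ≤ Real.log ((∑ a, Real.exp (g a)) * Real.exp M) := by
        apply Real.log_le_log hfpos h1
    _ = Real.log (∑ a, Real.exp (g a)) + M := by
        rw [Real.log_mul (ne_of_gt hgpos) (Real.exp_ne_zero _), Real.log_exp]

private lemma spi_lse_le {A : Type*} [Fintype A] [Nonempty A] (f : A → ℝ) (M : ℝ)
    (h : ∀ a, f a ≤ M) :
    Real.log (∑ a, Real.exp (f a)) ≤ Real.log (Fintype.card A : ℝ) + M := by
  have hfpos : 0 < ∑ a, Real.exp (f a) :=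
    Finset.sum_pos (fun a _ => Real.exp_pos _) Finset.univ_nonempty
  have hcard : (0:ℝ) < Fintype.card A := by
    exact_mod_cast Fintype.card_pos
  have h1 : ∑ a, Real.exp (f a) ≤ (Fintype.card A : ℝ) * Real.exp M := by
    calc ∑ a, Real.exp (f a) ≤ ∑ _a : A, Real.exp M :=
          Finset.sum_le_sum fun a _ => Real.exp_le_exp.2 (h a)
      _ = (Fintype.card A : ℝ) * Real.exp M := by
          rw [Finset.sum_const, Finset.card_univ, nsmul_eq_mul]
  calc Real.log (∑ a, Real.exp (f a))
      ≤ Real.log ((Fintype.card A : ℝ) * Real.exp M) := Real.log_le_log hfpos h1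
    _ = Real.log (Fintype.card A : ℝ) + M := by
        rw [Real.log_mul (ne_of_gt hcard) (Real.exp_ne_zero _), Real.log_exp]

private lemma spi_diff_step {S : Type*} [Fintype S] (γ : ℝ) (hγ0 : 0 ≤ γ)
    (w : S → ℝ) (hw : ∀ s', 0 ≤ w s')
    (X Y Z : S → ℝ) (hXY : ∀ s', X s' - Y s' ≤ Z s') (c : ℝ) :
    (c + γ * ∑ s', w s' * X s') - (c + γ * ∑ s', w s' * Y s')
      ≤ γ * ∑ s', w s' * Z s' := by
  have h1 : (∑ s', w s' * X s') - (∑ s', w s' * Y s') = ∑ s', w s' * (X s' - Y s') := by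
    rw [← Finset.sum_sub_distrib]
    exact Finset.sum_congr rfl fun s' _ => by ring
  have h2 : ∑ s', w s' * (X s' - Y s') ≤ ∑ s', w s' * Z s' :=
    Finset.sum_le_sum fun s' _ => mul_le_mul_of_nonneg_left (hXY s') (hw s')
  calc (c + γ * ∑ s', w s' * X s') - (c + γ * ∑ s', w s' * Y s')
      = γ * ((∑ s', w s' * X s') - (∑ s', w s' * Y s')) := by ring
    _ ≤ γ * ∑ s', w s' * Z s' :=
        mul_le_mul_of_nonneg_left (h1 ▸ h2) hγ0

private lemma spi_contraction_le {S A : Type*} [Fintype S] [Fintype A]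
    [Nonempty S] [Nonempty A]
    (γ : ℝ) (hγ0 : 0 ≤ γ) (hγ1 : γ < 1)
    (p : S → A → S → ℝ) (hp : ∀ s a, (∀ s', 0 ≤ p s a s') ∧ ∑ s', p s a s' = 1)
    (π : S → A → ℝ) (hπ0 : ∀ s a, 0 ≤ π s a) (hπ1 : ∀ s, ∑ a, π s a = 1)
    (d : S → A → ℝ)
    (h : ∀ s a, d s a ≤ γ * ∑ s', p s a s' * ∑ a', π s' a' * d s' a') :
    ∀ s a, d s a ≤ 0 := by
  obtain ⟨⟨s0, a0⟩, hmax⟩ := Finite.exists_max (fun x : S × A => d x.1 x.2)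
  set M := d s0 a0 with hMdef
  have hM : ∀ s a, d s a ≤ M := fun s a => hmax (s, a)
  have inner : ∀ s', ∑ a', π s' a' * d s' a' ≤ M := fun s' =>
    spi_avg_le _ _ M (hπ0 s') (hπ1 s') (hM s')
  have outer : ∑ s', p s0 a0 s' * ∑ a', π s' a' * d s' a' ≤ M :=
    spi_avg_le _ _ M (hp s0 a0).1 (hp s0 a0).2 inner
  have step : M ≤ γ * M :=
    le_trans (h s0 a0) (mul_le_mul_of_nonneg_left outer hγ0)
  have hM0 : M ≤ 0 := by nlinarith
  exact fun s a => le_trans (hM s a) hM0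

/-- soft policy iteration: alternating soft policy evaluation
(`Q k` is the soft Q-function of the full-support policy `π k`) and soft policy
improvement (`π (k+1)` is the Boltzmann distribution of `Q k`) yields a
monotone nondecreasing sequence of Q-functions that converges pointwise to a
limit `Qstar` which dominates the soft Q-function of every full-support
policy. -/
theorem soft_policy_iteration_converges {S A : Type*} [Fintype S] [Fintype A]
    (r : S → A → ℝ) (γ : ℝ) (hγ0 : 0 ≤ γ) (hγ1 : γ < 1)
    (p : S → A → S → ℝ)
    (hp : ∀ s a, (∀ s', 0 ≤ p s a s') ∧ ∑ s', p s a s' = 1)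
    (π : ℕ → S → A → ℝ) (Q : ℕ → S → A → ℝ)
    (hπ_pos : ∀ k s a, 0 < π k s a) (hπ_sum : ∀ k s, ∑ a, π k s a = 1)
    (hQ : ∀ k s a, Q k s a = r s a + γ * ∑ s', p s a s' *
      ∑ a', π k s' a' * (Q k s' a' - Real.log (π k s' a')))
    (himp : ∀ k s a,
      π (k + 1) s a = Real.exp (Q k s a) / ∑ b, Real.exp (Q k s b)) :
    (∀ k s a, Q k s a ≤ Q (k + 1) s a) ∧
    ∃ Qstar : S → A → ℝ,
      (∀ s a, Filter.Tendsto (fun k => Q k s a) Filter.atTop (nhds (Qstar s a))) ∧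
      ∀ π' : S → A → ℝ, (∀ s a, 0 < π' s a) → (∀ s, ∑ a, π' s a = 1) →
        ∀ Q' : S → A → ℝ,
          (∀ s a, Q' s a = r s a + γ * ∑ s', p s a s' *
            ∑ a', π' s' a' * (Q' s' a' - Real.log (π' s' a'))) →
          ∀ s a, Q' s a ≤ Qstar s a := by
  classical
  rcases isEmpty_or_nonempty S with hS | hS
  · exact ⟨fun k s => isEmptyElim s, ⟨fun _ _ => 0, fun s => isEmptyElim s,
      fun π' _ _ Q' _ s => isEmptyElim s⟩⟩
  rcases isEmpty_or_nonempty A with hA | hA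
  · exfalso
    have h := hπ_sum 0 (Classical.arbitrary S)
    simp [Finset.univ_eq_empty] at h
  -- basic facts
  have hZpos : ∀ k s, 0 < ∑ b, Real.exp (Q k s b) := fun k s =>
    Finset.sum_pos (fun b _ => Real.exp_pos _) Finset.univ_nonempty
  have hlogπ : ∀ k s a, Real.log (π (k + 1) s a)
      = Q k s a - Real.log (∑ b, Real.exp (Q k s b)) := by
    intro k s a
    rw [himp, Real.log_div (Real.exp_ne_zero _) (ne_of_gt (hZpos k s)), Real.log_exp]
  -- softmax identity: ∑ π_{k+1} (Q_k - log π_{k+1}) = lse(Q_k)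
  have id1 : ∀ k s', ∑ a', π (k + 1) s' a' * (Q k s' a' - Real.log (π (k + 1) s' a'))
      = Real.log (∑ b, Real.exp (Q k s' b)) := by
    intro k s'
    have h : ∀ a' ∈ Finset.univ, π (k + 1) s' a' * (Q k s' a' - Real.log (π (k + 1) s' a'))
        = π (k + 1) s' a' * Real.log (∑ b, Real.exp (Q k s' b)) := by
      intro a' _
      rw [hlogπ k s' a']
      ring
    rw [Finset.sum_congr rfl h, ← Finset.sum_mul, hπ_sum, one_mul]
  -- Gibbs bound for any full-support policy
  have gibbs' : ∀ (ρ : S → A → ℝ), (∀ s a, 0 < ρ s a) → (∀ s, ∑ a, ρ s a = 1) →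
      ∀ (f : S → A → ℝ) s', ∑ a', ρ s' a' * (f s' a' - Real.log (ρ s' a'))
        ≤ Real.log (∑ b, Real.exp (f s' b)) := by
    intro ρ h1 h2 f s'
    exact spi_gibbs (ρ s') (f s') (h1 s') (h2 s')
  -- PART 1: monotonicity
  have mono : ∀ k s a, Q k s a ≤ Q (k + 1) s a := by
    intro k
    have key : ∀ s a, Q k s a - Q (k + 1) s a
        ≤ γ * ∑ s', p s a s' * ∑ a', π (k + 1) s' a' * (Q k s' a' - Q (k + 1) s' a') := by
      intro s a
      rw [hQ k s a, hQ (k + 1) s a]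
      refine spi_diff_step γ hγ0 (p s a) (hp s a).1 _ _ _ (fun s' => ?_) (r s a)
      -- X s' - Y s' ≤ ∑ π_{k+1}(Q_k - Q_{k+1})
      have h1 : ∑ a', π k s' a' * (Q k s' a' - Real.log (π k s' a'))
          ≤ Real.log (∑ b, Real.exp (Q k s' b)) := gibbs' (π k) (hπ_pos k) (hπ_sum k) (Q k) s'
      have h2 : Real.log (∑ b, Real.exp (Q k s' b))
          - ∑ a', π (k + 1) s' a' * (Q (k + 1) s' a' - Real.log (π (k + 1) s' a'))
          = ∑ a', π (k + 1) s' a' * (Q k s' a' - Q (k + 1) s' a') := by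
        rw [← id1 k s', ← Finset.sum_sub_distrib]
        exact Finset.sum_congr rfl fun a' _ => by ring
      linarith
    exact fun s a => sub_nonpos.mp
      (spi_contraction_le γ hγ0 hγ1 p hp (π (k + 1)) (fun s a => (hπ_pos (k + 1) s a).le)
        (hπ_sum (k + 1)) (fun s a => Q k s a - Q (k + 1) s a) key s a)
  refine ⟨mono, ?_⟩
  -- PART 2: uniform upper bound
  obtain ⟨⟨sr, ar⟩, hrmax⟩ := Finite.exists_max (fun x : S × A => r x.1 x.2)
  set R := r sr ar with hRdef
  have hR : ∀ s a, r s a ≤ R := fun s a => hrmax (s, a)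
  set L := Real.log (Fintype.card A : ℝ) with hLdef
  have hL0 : 0 ≤ L := Real.log_nonneg (by exact_mod_cast Fintype.card_pos)
  set B := (R + γ * L) / (1 - γ) with hBdef
  have bound : ∀ k s a, Q k s a ≤ B := by
    intro k
    obtain ⟨⟨s0, a0⟩, hmax⟩ := Finite.exists_max (fun x : S × A => Q k x.1 x.2)
    set M := Q k s0 a0 with hMdef
    have hM : ∀ s a, Q k s a ≤ M := fun s a => hmax (s, a)
    have hMB : M ≤ B := by
      have inner : ∀ s', ∑ a', π k s' a' * (Q k s' a' - Real.log (π k s' a')) ≤ L + M := by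
        intro s'
        refine le_trans (gibbs' (π k) (hπ_pos k) (hπ_sum k) (Q k) s') ?_
        exact spi_lse_le (Q k s') M (hM s')
      have outer : ∑ s', p s0 a0 s' *
          ∑ a', π k s' a' * (Q k s' a' - Real.log (π k s' a')) ≤ L + M :=
        spi_avg_le _ _ (L + M) (hp s0 a0).1 (hp s0 a0).2 inner
      have hstep : M ≤ R + γ * L + γ * M := by
        have h4 := mul_le_mul_of_nonneg_left outer hγ0
        have h4' : γ * (L + M) = γ * L + γ * M := by ring
        have h5 : M = r s0 a0 + γ * ∑ s', p s0 a0 s' *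
            ∑ a', π k s' a' * (Q k s' a' - Real.log (π k s' a')) := hMdef.trans (hQ k s0 a0)
        linarith [hR s0 a0]
      rw [hBdef, le_div_iff₀ (by linarith)]
      nlinarith
    exact fun s a => le_trans (hM s a) hMB
  -- the limit
  have hbdd : ∀ s a, BddAbove (Set.range fun k => Q k s a) := by
    intro s a
    exact ⟨B, by rintro _ ⟨k, rfl⟩; exact bound k s a⟩
  have hmono' : ∀ s a, Monotone fun k => Q k s a := fun s a =>
    monotone_nat_of_le_succ fun k => mono k s a
  refine ⟨fun s a => ⨆ k, Q k s a, fun s a => tendsto_atTop_ciSup (hmono' s a) (hbdd s a), ?_⟩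
  have hle_star : ∀ k s a, Q k s a ≤ ⨆ j, Q j s a := fun k s a =>
    le_ciSup (hbdd s a) k
  -- PART 3: dominance
  intro π' hπ'pos hπ'sum Q' hQ' s a
  obtain ⟨⟨s1, a1⟩, hCmax⟩ := Finite.exists_max (fun x : S × A => Q' x.1 x.2 - Q 0 x.1 x.2)
  set C := max (Q' s1 a1 - Q 0 s1 a1) 0 with hCdef
  have hC0 : 0 ≤ C := le_max_right _ _
  have hC : ∀ s a, Q' s a - Q 0 s a ≤ C := fun s a =>
    le_trans (hCmax (s, a)) (le_max_left _ _)
  have ind : ∀ k, ∀ s a, Q' s a - Q k s a ≤ γ ^ k * C := by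
    intro k
    induction k with
    | zero => intro s a; simpa using hC s a
    | succ k ih =>
      intro s a
      rw [hQ' s a, hQ (k + 1) s a]
      have hstep : (r s a + γ * ∑ s', p s a s' *
            ∑ a', π' s' a' * (Q' s' a' - Real.log (π' s' a')))
          - (r s a + γ * ∑ s', p s a s' *
            ∑ a', π (k + 1) s' a' * (Q (k + 1) s' a' - Real.log (π (k + 1) s' a')))
          ≤ γ * ∑ s', p s a s' * (γ ^ k * C) := by
        refine spi_diff_step γ hγ0 (p s a) (hp s a).1 _ _ _ (fun s' => ?_) (r s a)
        have h1 : ∑ a', π' s' a' * (Q' s' a' - Real.log (π' s' a'))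
            ≤ Real.log (∑ b, Real.exp (Q' s' b)) := gibbs' π' hπ'pos hπ'sum Q' s'
        have h2 : Real.log (∑ b, Real.exp (Q' s' b))
            ≤ Real.log (∑ b, Real.exp (Q k s' b)) + γ ^ k * C :=
          spi_lse_shift (Q' s') (Q k s') (γ ^ k * C) (fun a' => by linarith [ih s' a'])
        have h3 : Real.log (∑ b, Real.exp (Q k s' b))
            ≤ ∑ a', π (k + 1) s' a' * (Q (k + 1) s' a' - Real.log (π (k + 1) s' a')) := by
          rw [← id1 k s']
          refine Finset.sum_le_sum fun a' _ => ?_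
          exact mul_le_mul_of_nonneg_left (by linarith [mono k s' a']) (hπ_pos (k + 1) s' a').le
        linarith
      have hsum : ∑ s', p s a s' * (γ ^ k * C) = γ ^ k * C := by
        rw [← Finset.sum_mul, (hp s a).2, one_mul]
      rw [hsum] at hstep
      calc (r s a + γ * ∑ s', p s a s' *
            ∑ a', π' s' a' * (Q' s' a' - Real.log (π' s' a')))
          - (r s a + γ * ∑ s', p s a s' *
            ∑ a', π (k + 1) s' a' * (Q (k + 1) s' a' - Real.log (π (k + 1) s' a')))
          ≤ γ * (γ ^ k * C) := hstep
        _ = γ ^ (k + 1) * C := by ring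
  have hfinal : ∀ k, Q' s a - (⨆ j, Q j s a) ≤ γ ^ k * C := fun k =>
    le_trans (by linarith [hle_star k s a, ind k s a] : Q' s a - (⨆ j, Q j s a) ≤ γ ^ k * C)
      le_rfl
  have htend : Filter.Tendsto (fun k => γ ^ k * C) Filter.atTop (nhds 0) := by
    have := (tendsto_pow_atTop_nhds_zero_of_lt_one hγ0 hγ1).mul_const C
    simpa using this
  have := ge_of_tendsto' htend hfinal
  linarith
end
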